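/- There exist unique ℂ-linear maps E, F, K, K⁻¹ on H_n such that K and K⁻¹ are unital algebra endomorphisms with K∘K⁻¹ = K⁻¹∘K = id, K(x_i) = q^{−1/2} x_i, K(y_i) = q^{1/2} y_i for all i, E(1) = F(1) = 0, E(x_i) = q^{1/2} y_i, E(y_i) = 0, F(x_i) = 0, F(y_i) = q^{−1/2} x_i for all i, and E(ab) = E(a)K(b) + K⁻¹(a)E(b), F(ab) = F(a)K(b) + K⁻¹(a)F(b) for all a, b ∈ H_n. Moreover these maps satisfy the operator identities K∘E = q·E∘K, K∘F = q^{−1}·F∘K, and E∘F − F∘E = (K² − K^{−2})/(q − q^{−1}) as ℂ-linear maps on H_n. -/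

import Mathlib

noncomputable section

/-- Generators of the algebra `H q n`: `x i` and `y i` for `i : Fin n`. -/
inductive Gen (n : ℕ) : Type
  | x : Fin n → Gen n
  | y : Fin n → Gen n

open FreeAlgebra in
/-- The defining relations of the braided algebra `H_n`:
`x_i y_i = q y_i x_i`, and for `i < j`:
`x_j x_i = q² x_i x_j`, `y_j y_i = q² y_i y_j`,
`x_j y_i = q y_i x_j + (q² − 1) x_i y_j`, `y_j x_i = q x_i y_j`. -/
inductive HRel (q : ℂ) (n : ℕ) :
    FreeAlgebra ℂ (Gen n) → FreeAlgebra ℂ (Gen n) → Prop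
  | diag (i : Fin n) :
      HRel q n (ι ℂ (Gen.x i) * ι ℂ (Gen.y i)) (q • (ι ℂ (Gen.y i) * ι ℂ (Gen.x i)))
  | xx {i j : Fin n} (h : i < j) :
      HRel q n (ι ℂ (Gen.x j) * ι ℂ (Gen.x i)) ((q ^ 2) • (ι ℂ (Gen.x i) * ι ℂ (Gen.x j)))
  | yy {i j : Fin n} (h : i < j) :
      HRel q n (ι ℂ (Gen.y j) * ι ℂ (Gen.y i)) ((q ^ 2) • (ι ℂ (Gen.y i) * ι ℂ (Gen.y j)))
  | xy {i j : Fin n} (h : i < j) :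
      HRel q n (ι ℂ (Gen.x j) * ι ℂ (Gen.y i))
        (q • (ι ℂ (Gen.y i) * ι ℂ (Gen.x j)) + (q ^ 2 - 1) • (ι ℂ (Gen.x i) * ι ℂ (Gen.y j)))
  | yx {i j : Fin n} (h : i < j) :
      HRel q n (ι ℂ (Gen.y j) * ι ℂ (Gen.x i)) (q • (ι ℂ (Gen.x i) * ι ℂ (Gen.y j)))

/-- The braided module algebra `H_n`. -/
abbrev H (q : ℂ) (n : ℕ) : Type := RingQuot (HRel q n)

/-- The generator `x i` of `H_n`. -/
def X (q : ℂ) {n : ℕ} (i : Fin n) : H q n :=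
  RingQuot.mkAlgHom ℂ (HRel q n) (FreeAlgebra.ι ℂ (Gen.x i))

/-- The generator `y i` of `H_n`. -/
def Y (q : ℂ) {n : ℕ} (i : Fin n) : H q n :=
  RingQuot.mkAlgHom ℂ (HRel q n) (FreeAlgebra.ι ℂ (Gen.y i))

/-- The bracket symbol `(ij) = q^{-1/2} x_i y_j - q^{1/2} y_i x_j`, where `s = q^{1/2}`. -/
def br (q s : ℂ) {n : ℕ} (i j : Fin n) : H q n :=
  s⁻¹ • (X q i * Y q j) - s • (Y q i * X q j)

/-- The defining properties of the `U_q(gl(2,ℝ))`-module-algebra structure maps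
`E`, `F`, `K`, `K⁻¹` on `H_n` (with `s = q^{1/2}`). -/
def IsEFKK (q s : ℂ) (n : ℕ) (E F K Kinv : H q n →ₗ[ℂ] H q n) : Prop :=
  K 1 = 1 ∧ Kinv 1 = 1 ∧
  (∀ a b : H q n, K (a * b) = K a * K b) ∧
  (∀ a b : H q n, Kinv (a * b) = Kinv a * Kinv b) ∧
  (∀ a : H q n, K (Kinv a) = a) ∧ (∀ a : H q n, Kinv (K a) = a) ∧
  (∀ i : Fin n, K (X q i) = s⁻¹ • X q i) ∧
  (∀ i : Fin n, K (Y q i) = s • Y q i) ∧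
  E 1 = 0 ∧ F 1 = 0 ∧
  (∀ i : Fin n, E (X q i) = s • Y q i) ∧
  (∀ i : Fin n, E (Y q i) = 0) ∧
  (∀ i : Fin n, F (X q i) = 0) ∧
  (∀ i : Fin n, F (Y q i) = s⁻¹ • X q i) ∧
  (∀ a b : H q n, E (a * b) = E a * K b + Kinv a * E b) ∧
  (∀ a b : H q n, F (a * b) = F a * K b + Kinv a * F b)
namespace Stmt0Aux
open FreeAlgebra RingQuot
lemma relD (q : ℂ) {n : ℕ} (i : Fin n) : X q i * Y q i = q • (Y q i * X q i) := by
  simpa only [X, Y, map_mul, map_smul] using RingQuot.mkAlgHom_rel ℂ (HRel.diag (q := q) i)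

lemma relXX (q : ℂ) {n : ℕ} {i j : Fin n} (h : i < j) :
    X q j * X q i = (q ^ 2) • (X q i * X q j) := by
  simpa only [X, map_mul, map_smul] using RingQuot.mkAlgHom_rel ℂ (HRel.xx (q := q) h)

lemma relYY (q : ℂ) {n : ℕ} {i j : Fin n} (h : i < j) :
    Y q j * Y q i = (q ^ 2) • (Y q i * Y q j) := by
  simpa only [Y, map_mul, map_smul] using RingQuot.mkAlgHom_rel ℂ (HRel.yy (q := q) h)

lemma relXY (q : ℂ) {n : ℕ} {i j : Fin n} (h : i < j) :
    X q j * Y q i = q • (Y q i * X q j) + (q ^ 2 - 1) • (X q i * Y q j) := by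
  simpa only [X, Y, map_mul, map_add, map_smul] using RingQuot.mkAlgHom_rel ℂ (HRel.xy (q := q) h)

lemma relYX (q : ℂ) {n : ℕ} {i j : Fin n} (h : i < j) :
    Y q j * X q i = q • (X q i * Y q j) := by
  simpa only [X, Y, map_mul, map_smul] using RingQuot.mkAlgHom_rel ℂ (HRel.yx (q := q) h)

lemma Hind {q : ℂ} {n : ℕ} {motive : H q n → Prop}
    (halg : ∀ c : ℂ, motive (algebraMap ℂ (H q n) c))
    (hX : ∀ i, motive (X q i)) (hY : ∀ i, motive (Y q i))
    (hadd : ∀ a b, motive a → motive b → motive (a + b))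
    (hmul : ∀ a b, motive a → motive b → motive (a * b)) :
    ∀ a, motive a := by
  intro a
  obtain ⟨w, rfl⟩ := RingQuot.mkAlgHom_surjective ℂ (HRel q n) a
  induction w using FreeAlgebra.induction with
  | grade0 c => simpa using halg c
  | grade1 g => cases g with
    | x i => exact hX i
    | y i => exact hY i
  | add a b ha hb => rw [map_add]; exact hadd _ _ ha hb
  | mul a b ha hb => rw [map_mul]; exact hmul _ _ ha hb
def Kfun (q s : ℂ) (n : ℕ) : Gen n → H q n
  | .x i => s⁻¹ • X q i
  | .y i => s • Y q i

def Kalg (q s : ℂ) (n : ℕ) : H q n →ₐ[ℂ] H q n :=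
  RingQuot.liftAlgHom ℂ ⟨FreeAlgebra.lift ℂ (Kfun q s n), by
    intro a b hab
    cases hab with
    | diag i =>
        simp only [map_mul, map_smul, lift_ι_apply, Kfun, smul_mul_assoc, mul_smul_comm,
          smul_smul, relD]
        module
    | xx h =>
        simp only [map_mul, map_smul, lift_ι_apply, Kfun, smul_mul_assoc, mul_smul_comm,
          smul_smul, relXX q h]
        module
    | yy h =>
        simp only [map_mul, map_smul, lift_ι_apply, Kfun, smul_mul_assoc, mul_smul_comm,
          smul_smul, relYY q h]
        module
    | xy h =>
        simp only [map_mul, map_add, map_smul, lift_ι_apply, Kfun, smul_mul_assoc,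
          mul_smul_comm, smul_smul, smul_add, relXY q h]
        module
    | yx h =>
        simp only [map_mul, map_smul, lift_ι_apply, Kfun, smul_mul_assoc, mul_smul_comm,
          smul_smul, relYX q h]
        module⟩

@[simp] lemma Kalg_X (q s : ℂ) {n : ℕ} (i : Fin n) : Kalg q s n (X q i) = s⁻¹ • X q i := by
  simp [Kalg, X, Kfun, RingQuot.liftAlgHom_mkAlgHom_apply]

@[simp] lemma Kalg_Y (q s : ℂ) {n : ℕ} (i : Fin n) : Kalg q s n (Y q i) = s • Y q i := by
  simp [Kalg, Y, Kfun, RingQuot.liftAlgHom_mkAlgHom_apply]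

lemma KKinv (q s : ℂ) {n : ℕ} (hs : s ≠ 0) (a : H q n) :
    Kalg q s n (Kalg q s⁻¹ n a) = a := by
  induction a using Hind with
  | halg c => simp
  | hX i => simp [smul_smul, hs]
  | hY i => simp [smul_smul, inv_mul_cancel₀ hs]
  | hadd a b ha hb => simp [ha, hb]
  | hmul a b ha hb => simp [ha, hb]

def Efun (q s : ℂ) (n : ℕ) : Gen n → Matrix (Fin 2) (Fin 2) (H q n)
  | .x i => !![s • X q i, s • Y q i; 0, s⁻¹ • X q i]
  | .y i => !![s⁻¹ • Y q i, 0; 0, s • Y q i]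

def Ffun (q s : ℂ) (n : ℕ) : Gen n → Matrix (Fin 2) (Fin 2) (H q n)
  | .x i => !![s • X q i, 0; 0, s⁻¹ • X q i]
  | .y i => !![s⁻¹ • Y q i, s⁻¹ • X q i; 0, s • Y q i]

def PhiE (s : ℂ) (n : ℕ) (hs : s ≠ 0) :
    H (s ^ 2) n →ₐ[ℂ] Matrix (Fin 2) (Fin 2) (H (s ^ 2) n) :=
  RingQuot.liftAlgHom ℂ ⟨FreeAlgebra.lift ℂ (Efun (s ^ 2) s n), by
    intro a b hab
    cases hab with
    | diag i =>
        simp only [map_mul, map_add, map_smul, lift_ι_apply, Efun]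
        ext a b
        fin_cases a <;> fin_cases b <;>
          simp only [Matrix.mul_apply, Fin.sum_univ_two, Matrix.smul_apply, Matrix.add_apply,
            Matrix.of_apply, Matrix.cons_val', Matrix.cons_val_zero, Matrix.cons_val_one,
            Matrix.head_cons, Matrix.head_fin_const, Matrix.empty_val', Matrix.cons_val_fin_one,
            Fin.mk_zero, Fin.mk_one, smul_mul_assoc, mul_smul_comm, smul_smul, zero_mul,
            mul_zero, smul_zero, add_zero, zero_add, smul_add, relD]
        all_goals match_scalars
        all_goals field_simp
        all_goals try ring
    | xx h =>
        simp only [map_mul, map_add, map_smul, lift_ι_apply, Efun]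
        ext a b
        fin_cases a <;> fin_cases b <;>
          simp only [Matrix.mul_apply, Fin.sum_univ_two, Matrix.smul_apply, Matrix.add_apply,
            Matrix.of_apply, Matrix.cons_val', Matrix.cons_val_zero, Matrix.cons_val_one,
            Matrix.head_cons, Matrix.head_fin_const, Matrix.empty_val', Matrix.cons_val_fin_one,
            Fin.mk_zero, Fin.mk_one, smul_mul_assoc, mul_smul_comm, smul_smul, zero_mul,
            mul_zero, smul_zero, add_zero, zero_add, smul_add, relXX _ h, relXY _ h, relYX _ h, relYY _ h]
        all_goals match_scalars
        all_goals field_simp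
        all_goals try ring
    | yy h =>
        simp only [map_mul, map_add, map_smul, lift_ι_apply, Efun]
        ext a b
        fin_cases a <;> fin_cases b <;>
          simp only [Matrix.mul_apply, Fin.sum_univ_two, Matrix.smul_apply, Matrix.add_apply,
            Matrix.of_apply, Matrix.cons_val', Matrix.cons_val_zero, Matrix.cons_val_one,
            Matrix.head_cons, Matrix.head_fin_const, Matrix.empty_val', Matrix.cons_val_fin_one,
            Fin.mk_zero, Fin.mk_one, smul_mul_assoc, mul_smul_comm, smul_smul, zero_mul,
            mul_zero, smul_zero, add_zero, zero_add, smul_add, relXX _ h, relXY _ h, relYX _ h, relYY _ h]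
        all_goals match_scalars
        all_goals field_simp
        all_goals try ring
    | xy h =>
        simp only [map_mul, map_add, map_smul, lift_ι_apply, Efun]
        ext a b
        fin_cases a <;> fin_cases b <;>
          simp only [Matrix.mul_apply, Fin.sum_univ_two, Matrix.smul_apply, Matrix.add_apply,
            Matrix.of_apply, Matrix.cons_val', Matrix.cons_val_zero, Matrix.cons_val_one,
            Matrix.head_cons, Matrix.head_fin_const, Matrix.empty_val', Matrix.cons_val_fin_one,
            Fin.mk_zero, Fin.mk_one, smul_mul_assoc, mul_smul_comm, smul_smul, zero_mul,
            mul_zero, smul_zero, add_zero, zero_add, smul_add, relXX _ h, relXY _ h, relYX _ h, relYY _ h]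
        all_goals match_scalars
        all_goals field_simp
        all_goals try ring
    | yx h =>
        simp only [map_mul, map_add, map_smul, lift_ι_apply, Efun]
        ext a b
        fin_cases a <;> fin_cases b <;>
          simp only [Matrix.mul_apply, Fin.sum_univ_two, Matrix.smul_apply, Matrix.add_apply,
            Matrix.of_apply, Matrix.cons_val', Matrix.cons_val_zero, Matrix.cons_val_one,
            Matrix.head_cons, Matrix.head_fin_const, Matrix.empty_val', Matrix.cons_val_fin_one,
            Fin.mk_zero, Fin.mk_one, smul_mul_assoc, mul_smul_comm, smul_smul, zero_mul,
            mul_zero, smul_zero, add_zero, zero_add, smul_add, relXX _ h, relXY _ h, relYX _ h, relYY _ h]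
        all_goals match_scalars
        all_goals field_simp
        all_goals try ring⟩

def PhiF (s : ℂ) (n : ℕ) (hs : s ≠ 0) :
    H (s ^ 2) n →ₐ[ℂ] Matrix (Fin 2) (Fin 2) (H (s ^ 2) n) :=
  RingQuot.liftAlgHom ℂ ⟨FreeAlgebra.lift ℂ (Ffun (s ^ 2) s n), by
    intro a b hab
    cases hab with
    | diag i =>
        simp only [map_mul, map_add, map_smul, lift_ι_apply, Ffun]
        ext a b
        fin_cases a <;> fin_cases b <;>
          simp only [Matrix.mul_apply, Fin.sum_univ_two, Matrix.smul_apply, Matrix.add_apply,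
            Matrix.of_apply, Matrix.cons_val', Matrix.cons_val_zero, Matrix.cons_val_one,
            Matrix.head_cons, Matrix.head_fin_const, Matrix.empty_val', Matrix.cons_val_fin_one,
            Fin.mk_zero, Fin.mk_one, smul_mul_assoc, mul_smul_comm, smul_smul, zero_mul,
            mul_zero, smul_zero, add_zero, zero_add, smul_add, relD]
        all_goals match_scalars
        all_goals field_simp
        all_goals try ring
    | xx h =>
        simp only [map_mul, map_add, map_smul, lift_ι_apply, Ffun]
        ext a b
        fin_cases a <;> fin_cases b <;>
          simp only [Matrix.mul_apply, Fin.sum_univ_two, Matrix.smul_apply, Matrix.add_apply,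
            Matrix.of_apply, Matrix.cons_val', Matrix.cons_val_zero, Matrix.cons_val_one,
            Matrix.head_cons, Matrix.head_fin_const, Matrix.empty_val', Matrix.cons_val_fin_one,
            Fin.mk_zero, Fin.mk_one, smul_mul_assoc, mul_smul_comm, smul_smul, zero_mul,
            mul_zero, smul_zero, add_zero, zero_add, smul_add, relXX _ h, relXY _ h, relYX _ h, relYY _ h]
        all_goals match_scalars
        all_goals field_simp
        all_goals try ring
    | yy h =>
        simp only [map_mul, map_add, map_smul, lift_ι_apply, Ffun]
        ext a b
        fin_cases a <;> fin_cases b <;>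
          simp only [Matrix.mul_apply, Fin.sum_univ_two, Matrix.smul_apply, Matrix.add_apply,
            Matrix.of_apply, Matrix.cons_val', Matrix.cons_val_zero, Matrix.cons_val_one,
            Matrix.head_cons, Matrix.head_fin_const, Matrix.empty_val', Matrix.cons_val_fin_one,
            Fin.mk_zero, Fin.mk_one, smul_mul_assoc, mul_smul_comm, smul_smul, zero_mul,
            mul_zero, smul_zero, add_zero, zero_add, smul_add, relXX _ h, relXY _ h, relYX _ h, relYY _ h]
        all_goals match_scalars
        all_goals field_simp
        all_goals try ring
    | xy h =>
        simp only [map_mul, map_add, map_smul, lift_ι_apply, Ffun]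
        ext a b
        fin_cases a <;> fin_cases b <;>
          simp only [Matrix.mul_apply, Fin.sum_univ_two, Matrix.smul_apply, Matrix.add_apply,
            Matrix.of_apply, Matrix.cons_val', Matrix.cons_val_zero, Matrix.cons_val_one,
            Matrix.head_cons, Matrix.head_fin_const, Matrix.empty_val', Matrix.cons_val_fin_one,
            Fin.mk_zero, Fin.mk_one, smul_mul_assoc, mul_smul_comm, smul_smul, zero_mul,
            mul_zero, smul_zero, add_zero, zero_add, smul_add, relXX _ h, relXY _ h, relYX _ h, relYY _ h]
        all_goals match_scalars
        all_goals field_simp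
        all_goals try ring
    | yx h =>
        simp only [map_mul, map_add, map_smul, lift_ι_apply, Ffun]
        ext a b
        fin_cases a <;> fin_cases b <;>
          simp only [Matrix.mul_apply, Fin.sum_univ_two, Matrix.smul_apply, Matrix.add_apply,
            Matrix.of_apply, Matrix.cons_val', Matrix.cons_val_zero, Matrix.cons_val_one,
            Matrix.head_cons, Matrix.head_fin_const, Matrix.empty_val', Matrix.cons_val_fin_one,
            Fin.mk_zero, Fin.mk_one, smul_mul_assoc, mul_smul_comm, smul_smul, zero_mul,
            mul_zero, smul_zero, add_zero, zero_add, smul_add, relXX _ h, relXY _ h, relYX _ h, relYY _ h]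
        all_goals match_scalars
        all_goals field_simp
        all_goals try ring⟩


@[simp] lemma PhiE_X (s : ℂ) {n : ℕ} (hs : s ≠ 0) (i : Fin n) :
    PhiE s n hs (X (s ^ 2) i) = !![s • X (s ^ 2) i, s • Y (s ^ 2) i; 0, s⁻¹ • X (s ^ 2) i] := by
  simp [PhiE, X, Efun, RingQuot.liftAlgHom_mkAlgHom_apply]

@[simp] lemma PhiE_Y (s : ℂ) {n : ℕ} (hs : s ≠ 0) (i : Fin n) :
    PhiE s n hs (Y (s ^ 2) i) = !![s⁻¹ • Y (s ^ 2) i, 0; 0, s • Y (s ^ 2) i] := by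
  simp [PhiE, Y, Efun, RingQuot.liftAlgHom_mkAlgHom_apply]

@[simp] lemma PhiF_X (s : ℂ) {n : ℕ} (hs : s ≠ 0) (i : Fin n) :
    PhiF s n hs (X (s ^ 2) i) = !![s • X (s ^ 2) i, 0; 0, s⁻¹ • X (s ^ 2) i] := by
  simp [PhiF, X, Ffun, RingQuot.liftAlgHom_mkAlgHom_apply]

@[simp] lemma PhiF_Y (s : ℂ) {n : ℕ} (hs : s ≠ 0) (i : Fin n) :
    PhiF s n hs (Y (s ^ 2) i) = !![s⁻¹ • Y (s ^ 2) i, s⁻¹ • X (s ^ 2) i; 0, s • Y (s ^ 2) i] := by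
  simp [PhiF, Y, Ffun, RingQuot.liftAlgHom_mkAlgHom_apply]

def entryLM (q : ℂ) (n : ℕ) (i j : Fin 2) :
    Matrix (Fin 2) (Fin 2) (H q n) →ₗ[ℂ] H q n where
  toFun M := M i j
  map_add' := by intros; simp
  map_smul' := by intros; simp

@[simp] lemma entryLM_apply (q : ℂ) (n : ℕ) (i j : Fin 2) (M : Matrix (Fin 2) (Fin 2) (H q n)) :
    entryLM q n i j M = M i j := rfl

def Emap (s : ℂ) (n : ℕ) (hs : s ≠ 0) : H (s ^ 2) n →ₗ[ℂ] H (s ^ 2) n :=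
  entryLM (s ^ 2) n 0 1 ∘ₗ (PhiE s n hs).toLinearMap

def Fmap (s : ℂ) (n : ℕ) (hs : s ≠ 0) : H (s ^ 2) n →ₗ[ℂ] H (s ^ 2) n :=
  entryLM (s ^ 2) n 0 1 ∘ₗ (PhiF s n hs).toLinearMap

lemma PhiE_form (s : ℂ) {n : ℕ} (hs : s ≠ 0) (a : H (s ^ 2) n) :
    PhiE s n hs a = !![Kalg (s ^ 2) s⁻¹ n a, Emap s n hs a; 0, Kalg (s ^ 2) s n a] := by
  induction a using Hind with
  | halg c =>
      ext a b
      fin_cases a <;> fin_cases b <;>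
        simp [Emap, entryLM_apply, Matrix.algebraMap_matrix_apply, Algebra.algebraMap_eq_smul_one]
  | hX i =>
      ext a b
      fin_cases a <;> fin_cases b <;> simp [Emap, entryLM_apply, inv_inv]
  | hY i =>
      ext a b
      fin_cases a <;> fin_cases b <;> simp [Emap, entryLM_apply, inv_inv]
  | hadd a b ha hb =>
      rw [map_add, ha, hb]
      ext u v
      fin_cases u <;> fin_cases v <;> simp [map_add]
  | hmul a b ha hb =>
      have hm : PhiE s n hs (a * b) = PhiE s n hs a * PhiE s n hs b := map_mul _ _ _
      have hE : Emap s n hs (a * b) = Emap s n hs a * Kalg (s ^ 2) s n b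
          + Kalg (s ^ 2) s⁻¹ n a * Emap s n hs b := by
        have : Emap s n hs (a * b) = (PhiE s n hs a * PhiE s n hs b) 0 1 := by
          simp [Emap, entryLM_apply, map_mul]
        rw [this, ha, hb]
        simp [Matrix.mul_apply, Fin.sum_univ_two]
        ring_nf
        rw [add_comm]
      rw [hm, ha, hb, hE, map_mul, map_mul]
      ext u v
      fin_cases u <;> fin_cases v <;>
        simp [Matrix.mul_apply, Fin.sum_univ_two]
      all_goals exact add_comm _ _

lemma PhiF_form (s : ℂ) {n : ℕ} (hs : s ≠ 0) (a : H (s ^ 2) n) :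
    PhiF s n hs a = !![Kalg (s ^ 2) s⁻¹ n a, Fmap s n hs a; 0, Kalg (s ^ 2) s n a] := by
  induction a using Hind with
  | halg c =>
      ext a b
      fin_cases a <;> fin_cases b <;>
        simp [Fmap, entryLM_apply, Matrix.algebraMap_matrix_apply, Algebra.algebraMap_eq_smul_one]
  | hX i =>
      ext a b
      fin_cases a <;> fin_cases b <;> simp [Fmap, entryLM_apply, inv_inv]
  | hY i =>
      ext a b
      fin_cases a <;> fin_cases b <;> simp [Fmap, entryLM_apply, inv_inv]
  | hadd a b ha hb =>
      rw [map_add, ha, hb]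
      ext u v
      fin_cases u <;> fin_cases v <;> simp [map_add]
  | hmul a b ha hb =>
      have hm : PhiF s n hs (a * b) = PhiF s n hs a * PhiF s n hs b := map_mul _ _ _
      have hE : Fmap s n hs (a * b) = Fmap s n hs a * Kalg (s ^ 2) s n b
          + Kalg (s ^ 2) s⁻¹ n a * Fmap s n hs b := by
        have : Fmap s n hs (a * b) = (PhiF s n hs a * PhiF s n hs b) 0 1 := by
          simp [Fmap, entryLM_apply, map_mul]
        rw [this, ha, hb]
        simp [Matrix.mul_apply, Fin.sum_univ_two]
        exact add_comm _ _
      rw [hm, ha, hb, hE, map_mul, map_mul]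
      ext u v
      fin_cases u <;> fin_cases v <;>
        simp [Matrix.mul_apply, Fin.sum_univ_two]
      all_goals exact add_comm _ _

lemma Emap_mul (s : ℂ) {n : ℕ} (hs : s ≠ 0) (a b : H (s ^ 2) n) :
    Emap s n hs (a * b) = Emap s n hs a * Kalg (s ^ 2) s n b
      + Kalg (s ^ 2) s⁻¹ n a * Emap s n hs b := by
  have h : Emap s n hs (a * b) = (PhiE s n hs a * PhiE s n hs b) 0 1 := by
    simp [Emap, entryLM_apply, map_mul]
  rw [h, PhiE_form s hs a, PhiE_form s hs b]
  simp [Matrix.mul_apply, Fin.sum_univ_two]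
  exact add_comm _ _

lemma Fmap_mul (s : ℂ) {n : ℕ} (hs : s ≠ 0) (a b : H (s ^ 2) n) :
    Fmap s n hs (a * b) = Fmap s n hs a * Kalg (s ^ 2) s n b
      + Kalg (s ^ 2) s⁻¹ n a * Fmap s n hs b := by
  have h : Fmap s n hs (a * b) = (PhiF s n hs a * PhiF s n hs b) 0 1 := by
    simp [Fmap, entryLM_apply, map_mul]
  rw [h, PhiF_form s hs a, PhiF_form s hs b]
  simp [Matrix.mul_apply, Fin.sum_univ_two]
  exact add_comm _ _

@[simp] lemma Emap_X (s : ℂ) {n : ℕ} (hs : s ≠ 0) (i : Fin n) :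
    Emap s n hs (X (s ^ 2) i) = s • Y (s ^ 2) i := by simp [Emap, entryLM_apply]

@[simp] lemma Emap_Y (s : ℂ) {n : ℕ} (hs : s ≠ 0) (i : Fin n) :
    Emap s n hs (Y (s ^ 2) i) = 0 := by simp [Emap, entryLM_apply]

@[simp] lemma Fmap_X (s : ℂ) {n : ℕ} (hs : s ≠ 0) (i : Fin n) :
    Fmap s n hs (X (s ^ 2) i) = 0 := by simp [Fmap, entryLM_apply]

@[simp] lemma Fmap_Y (s : ℂ) {n : ℕ} (hs : s ≠ 0) (i : Fin n) :
    Fmap s n hs (Y (s ^ 2) i) = s⁻¹ • X (s ^ 2) i := by simp [Fmap, entryLM_apply]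

@[simp] lemma Emap_one (s : ℂ) {n : ℕ} (hs : s ≠ 0) : Emap s n hs 1 = 0 := by
  simp [Emap, entryLM_apply, Matrix.one_apply]

@[simp] lemma Fmap_one (s : ℂ) {n : ℕ} (hs : s ≠ 0) : Fmap s n hs 1 = 0 := by
  simp [Fmap, entryLM_apply, Matrix.one_apply]

lemma isEFKK_exists (s : ℂ) {n : ℕ} (hs : s ≠ 0) :
    IsEFKK (s ^ 2) s n (Emap s n hs) (Fmap s n hs)
      (Kalg (s ^ 2) s n).toLinearMap (Kalg (s ^ 2) s⁻¹ n).toLinearMap := by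
  refine ⟨by simp, by simp, fun a b => by simp [map_mul], fun a b => by simp [map_mul],
    fun a => by simpa using KKinv _ s hs a, fun a => ?_, fun i => by simp,
    fun i => by simp,
    Emap_one s hs, Fmap_one s hs, fun i => Emap_X s hs i, fun i => Emap_Y s hs i,
    fun i => Fmap_X s hs i, fun i => Fmap_Y s hs i,
    fun a b => by simpa using Emap_mul s hs a b,
    fun a b => by simpa using Fmap_mul s hs a b⟩
  have h2 := KKinv (s ^ 2) s⁻¹ (inv_ne_zero hs) a
  rw [inv_inv] at h2
  simpa using h2

lemma uniq (q s : ℂ) {n : ℕ} {E F K Kinv E' F' K' Kinv' : H q n →ₗ[ℂ] H q n}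
    (h : IsEFKK q s n E F K Kinv) (h' : IsEFKK q s n E' F' K' Kinv') :
    E = E' ∧ F = F' ∧ K = K' ∧ Kinv = Kinv' := by
  obtain ⟨hK1, hKinv1, hKm, hKinvm, hKKinv, hKinvK, hKX, hKY, hE1, hF1, hEX, hEY,
    hFX, hFY, hEm, hFm⟩ := h
  obtain ⟨hK1', hKinv1', hKm', hKinvm', hKKinv', hKinvK', hKX', hKY', hE1', hF1', hEX', hEY',
    hFX', hFY', hEm', hFm'⟩ := h'
  have hK : ∀ a, K a = K' a := by
    intro a
    induction a using Hind with
    | halg c => rw [Algebra.algebraMap_eq_smul_one, map_smul, map_smul, hK1, hK1']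
    | hX i => rw [hKX, hKX']
    | hY i => rw [hKY, hKY']
    | hadd a b ha hb => rw [map_add, map_add, ha, hb]
    | hmul a b ha hb => rw [hKm, hKm', ha, hb]
  have hKi : ∀ a, Kinv a = Kinv' a := by
    intro a
    conv_rhs => rw [← hKKinv a, hK (Kinv a), hKinvK']
  have hE : ∀ a, E a = E' a := by
    intro a
    induction a using Hind with
    | halg c =>
        rw [Algebra.algebraMap_eq_smul_one, map_smul, map_smul, hE1, hE1']
    | hX i => rw [hEX, hEX']
    | hY i => rw [hEY, hEY']
    | hadd a b ha hb => rw [map_add, map_add, ha, hb]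
    | hmul a b ha hb => rw [hEm, hEm', ha, hb, hK b, hKi a]
  have hF : ∀ a, F a = F' a := by
    intro a
    induction a using Hind with
    | halg c =>
        rw [Algebra.algebraMap_eq_smul_one, map_smul, map_smul, hF1, hF1']
    | hX i => rw [hFX, hFX']
    | hY i => rw [hFY, hFY']
    | hadd a b ha hb => rw [map_add, map_add, ha, hb]
    | hmul a b ha hb => rw [hFm, hFm', ha, hb, hK b, hKi a]
  exact ⟨LinearMap.ext hE, LinearMap.ext hF, LinearMap.ext hK, LinearMap.ext hKi⟩

lemma KE_pt (s : ℂ) {n : ℕ} {E F K Kinv : H (s ^ 2) n →ₗ[ℂ] H (s ^ 2) n} (hs : s ≠ 0)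
    (h : IsEFKK (s ^ 2) s n E F K Kinv) : ∀ a, K (E a) = (s ^ 2) • E (K a) := by
  obtain ⟨hK1, hKinv1, hKm, hKinvm, hKKinv, hKinvK, hKX, hKY, hE1, hF1, hEX, hEY,
    hFX, hFY, hEm, hFm⟩ := h
  intro a
  induction a using Hind with
  | halg c => simp [Algebra.algebraMap_eq_smul_one, map_smul, hE1, hK1]
  | hX i =>
      rw [hEX, map_smul, hKY, hKX, map_smul, hEX]
      match_scalars
      field_simp
      try ring
  | hY i => simp [hEY, hKY, map_smul]
  | hadd a b iha ihb => simp [map_add, iha, ihb]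
  | hmul a b iha ihb =>
      rw [hEm a b, map_add, hKm (E a) (K b), hKm (Kinv a) (E b), iha, ihb, hKKinv a,
        hKm a b, hEm (K a) (K b), hKinvK a]
      simp only [smul_mul_assoc, mul_smul_comm, smul_add]

lemma KF_pt (s : ℂ) {n : ℕ} {E F K Kinv : H (s ^ 2) n →ₗ[ℂ] H (s ^ 2) n} (hs : s ≠ 0)
    (h : IsEFKK (s ^ 2) s n E F K Kinv) : ∀ a, K (F a) = (s ^ 2)⁻¹ • F (K a) := by
  obtain ⟨hK1, hKinv1, hKm, hKinvm, hKKinv, hKinvK, hKX, hKY, hE1, hF1, hEX, hEY,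
    hFX, hFY, hEm, hFm⟩ := h
  intro a
  induction a using Hind with
  | halg c => simp [Algebra.algebraMap_eq_smul_one, map_smul, hF1, hK1]
  | hX i => simp [hFX, hKX, map_smul]
  | hY i =>
      rw [hFY, map_smul, hKX, hKY, map_smul, hFY]
      match_scalars
      field_simp
      try ring
  | hadd a b iha ihb => simp [map_add, iha, ihb]
  | hmul a b iha ihb =>
      rw [hFm a b, map_add, hKm (F a) (K b), hKm (Kinv a) (F b), iha, ihb, hKKinv a,
        hKm a b, hFm (K a) (K b), hKinvK a]
      simp only [smul_mul_assoc, mul_smul_comm, smul_add]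

lemma KinvE_pt (s : ℂ) {n : ℕ} {E F K Kinv : H (s ^ 2) n →ₗ[ℂ] H (s ^ 2) n} (hs : s ≠ 0)
    (h : IsEFKK (s ^ 2) s n E F K Kinv) : ∀ a, Kinv (E a) = (s ^ 2)⁻¹ • E (Kinv a) := by
  intro a
  have h1 := KE_pt s hs h (Kinv a)
  rw [h.2.2.2.2.1 a] at h1
  have h2 := congrArg Kinv h1
  rw [h.2.2.2.2.2.1, map_smul] at h2
  rw [h2, smul_smul, inv_mul_cancel₀ (pow_ne_zero 2 hs), one_smul]

lemma KinvF_pt (s : ℂ) {n : ℕ} {E F K Kinv : H (s ^ 2) n →ₗ[ℂ] H (s ^ 2) n} (hs : s ≠ 0)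
    (h : IsEFKK (s ^ 2) s n E F K Kinv) : ∀ a, Kinv (F a) = (s ^ 2) • F (Kinv a) := by
  intro a
  have h1 := KF_pt s hs h (Kinv a)
  rw [h.2.2.2.2.1 a] at h1
  have h2 := congrArg Kinv h1
  rw [h.2.2.2.2.2.1, map_smul] at h2
  rw [h2, smul_smul, mul_inv_cancel₀ (pow_ne_zero 2 hs), one_smul]

lemma EF_pt (s : ℂ) {n : ℕ} {E F K Kinv : H (s ^ 2) n →ₗ[ℂ] H (s ^ 2) n} (hs : s ≠ 0)
    (hne : s ^ 2 - (s ^ 2)⁻¹ ≠ 0)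
    (h : IsEFKK (s ^ 2) s n E F K Kinv) :
    ∀ a, E (F a) = F (E a) + (s ^ 2 - (s ^ 2)⁻¹)⁻¹ • (K (K a) - Kinv (Kinv a)) := by
  have kE := KE_pt s hs h
  have kF := KF_pt s hs h
  have kiE := KinvE_pt s hs h
  have kiF := KinvF_pt s hs h
  obtain ⟨hK1, hKinv1, hKm, hKinvm, hKKinv, hKinvK, hKX, hKY, hE1, hF1, hEX, hEY,
    hFX, hFY, hEm, hFm⟩ := h
  have hKinvX : ∀ i, Kinv (X (s ^ 2) i) = s • X (s ^ 2) i := by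
    intro i
    have h1 : K (s • X (s ^ 2) i) = X (s ^ 2) i := by
      rw [map_smul, hKX, smul_smul, mul_inv_cancel₀ hs, one_smul]
    have h2 := hKinvK (s • X (s ^ 2) i)
    rwa [h1] at h2
  have hKinvY : ∀ i, Kinv (Y (s ^ 2) i) = s⁻¹ • Y (s ^ 2) i := by
    intro i
    have h1 : K (s⁻¹ • Y (s ^ 2) i) = Y (s ^ 2) i := by
      rw [map_smul, hKY, smul_smul, inv_mul_cancel₀ hs, one_smul]
    have h2 := hKinvK (s⁻¹ • Y (s ^ 2) i)
    rwa [h1] at h2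
  have h6 : (-s ^ 2 + s ^ 6) ≠ 0 := by
    have he : -s ^ 2 + s ^ 6 = s ^ 4 * (s ^ 2 - (s ^ 2)⁻¹) := by
      field_simp
      ring
    rw [he]
    exact mul_ne_zero (pow_ne_zero _ hs) hne
  intro a
  induction a using Hind with
  | halg c =>
      simp [Algebra.algebraMap_eq_smul_one, map_smul, hE1, hF1, hK1, hKinv1]
  | hX i =>
      rw [hFX, map_zero, hEX, map_smul, hFY, hKX, map_smul, hKX, hKinvX, map_smul, hKinvX]
      match_scalars
      have hc : (-s ^ 2 + s ^ 6) * (-s ^ 2 + s ^ 6)⁻¹ = 1 := mul_inv_cancel₀ h6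
      have h4 : s ^ 4 - 1 ≠ 0 := by
        intro h; apply h6; linear_combination s ^ 2 * h
      field_simp
      ring
  | hY i =>
      rw [hEY, map_zero, hFY, map_smul, hEX, hKY, map_smul, hKY, hKinvY, map_smul, hKinvY]
      match_scalars
      have hc : (-s ^ 2 + s ^ 6) * (-s ^ 2 + s ^ 6)⁻¹ = 1 := mul_inv_cancel₀ h6
      have h4 : s ^ 4 - 1 ≠ 0 := by
        intro h; apply h6; linear_combination s ^ 2 * h
      field_simp
  | hadd a b iha ihb => simp [map_add, iha, ihb, smul_add, smul_sub]; abel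
  | hmul a b iha ihb =>
      rw [hFm a b, map_add, hEm (F a) (K b), hEm (Kinv a) (F b),
        hEm a b, map_add, hFm (E a) (K b), hFm (Kinv a) (E b),
        kiF a, kF b, kiE a, kE b, iha, ihb,
        hKm a b, hKm (K a) (K b), hKinvm a b, hKinvm (Kinv a) (Kinv b)]
      simp only [smul_mul_assoc, mul_smul_comm, smul_smul, add_mul, mul_add, sub_mul,
        mul_sub, smul_add, smul_sub]
      match_scalars <;> field_simp <;> try ring

end Stmt0Aux

open Stmt0Aux in
/-- There exist unique ℂ-linear maps `E, F, K, K⁻¹` on `H_n` with the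
module-algebra properties, and they satisfy `K∘E = q E∘K`, `K∘F = q⁻¹ F∘K`, and
`E∘F − F∘E = (K² − K⁻²)/(q − q⁻¹)`. -/
theorem stmt0 (q s : ℂ) (hq : ‖q‖ = 1) (hq1 : q ≠ 1) (hq2 : q ≠ -1)
    (hq3 : q ≠ Complex.I) (hq4 : q ≠ -Complex.I) (hs : s ^ 2 = q)
    (n : ℕ) (hn : 1 ≤ n) :
    (∃! T : (H q n →ₗ[ℂ] H q n) × (H q n →ₗ[ℂ] H q n) ×
        (H q n →ₗ[ℂ] H q n) × (H q n →ₗ[ℂ] H q n),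
      IsEFKK q s n T.1 T.2.1 T.2.2.1 T.2.2.2) ∧
    (∀ E F K Kinv : H q n →ₗ[ℂ] H q n, IsEFKK q s n E F K Kinv →
      K ∘ₗ E = q • (E ∘ₗ K) ∧
      K ∘ₗ F = q⁻¹ • (F ∘ₗ K) ∧
      E ∘ₗ F - F ∘ₗ E = (q - q⁻¹)⁻¹ • (K ∘ₗ K - Kinv ∘ₗ Kinv)) := by
  have hq0 : q ≠ 0 := by
    intro h
    rw [h] at hq
    simp at hq
  have hs0 : s ≠ 0 := by
    intro h
    rw [h] at hs
    simp at hs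
    exact hq0 hs.symm
  have hsq1 : q ^ 2 ≠ 1 := by
    intro h
    have h2 : (q - 1) * (q + 1) = 0 := by ring_nf; linear_combination h
    rcases mul_eq_zero.mp h2 with h3 | h3
    · exact hq1 (by linear_combination h3)
    · exact hq2 (by linear_combination h3)
  have hne : q - q⁻¹ ≠ 0 := by
    intro h
    apply hsq1
    have h2 : q = q⁻¹ := by linear_combination h
    have h3 : q * q = q * q⁻¹ := by rw [← h2]
    rw [mul_inv_cancel₀ hq0] at h3
    calc q ^ 2 = q * q := sq q
    _ = 1 := h3
  subst hs
  constructor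
  · refine ⟨⟨Emap s n hs0, Fmap s n hs0,
      (Kalg (s ^ 2) s n).toLinearMap, (Kalg (s ^ 2) s⁻¹ n).toLinearMap⟩,
      isEFKK_exists s hs0, ?_⟩
    rintro ⟨E, F, K, Kinv⟩ hT
    obtain ⟨hE, hF, hK, hKi⟩ := uniq (s ^ 2) s hT (isEFKK_exists s hs0)
    exact Prod.ext hE (Prod.ext hF (Prod.ext hK hKi))
  · intro E F K Kinv hT
    refine ⟨?_, ?_, ?_⟩
    · ext a
      simpa using KE_pt s hs0 hT a
    · ext a
      simpa using KF_pt s hs0 hT a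
    · ext a
      have h1 := EF_pt s hs0 hne hT a
      simp only [LinearMap.sub_apply, LinearMap.comp_apply, LinearMap.smul_apply]
      rw [h1]
      abel
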